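/- For positive integers m and n, the lattice Co(𝐦) of order-convex subsets of the m-element chain 𝐦 embeds into Co(P) for some poset P of length at most n if and only if m ≤ n + 1. Consequently, for every positive integer n, the class SUB_n of lattices embeddable into Co(P) with lh(P) ≤ n is a proper subclass of SUB_{n+1}. -/

import Mathlib

/-! Common definitions: lattices of order-convex subsets of a poset,
length of a poset, the identities (S), (U), (B), (L2), (H_n), (H_{m,n}),
join-irreducibility, the join-dependency relation, join-seeds,
the posets P_{I,J}, tree-like posets, D-closed sets,
and complete lattice congruences. -/

open Set

/-- The lattice `Co P` of all order-convex subsets of a poset `P`. -/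
def Co (P : Type*) [PartialOrder P] : Type _ := {s : Set P // s.OrdConnected}

namespace Co

variable {P : Type*} [PartialOrder P]

instance : PartialOrder (Co P) := Subtype.partialOrder _

instance : InfSet (Co P) :=
  ⟨fun S => ⟨⋂ s ∈ S, s.1, Set.ordConnected_biInter fun s _ => s.2⟩⟩

noncomputable instance : CompleteLattice (Co P) :=
  completeLatticeOfInf (Co P) (by
    intro S
    constructor
    · intro t ht
      exact Set.biInter_subset_of_mem (t := fun s => s.1) ht
    · intro b hb
      exact Set.subset_iInter₂ fun t ht => hb ht)

/-- The order-convex subset of `P` with underlying set `X`. -/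
def mk' (X : Set P) (hX : X.OrdConnected) : Co P := ⟨X, hX⟩

/-- The singleton `{p}`, as an order-convex set. -/
def sngl (p : P) : Co P := ⟨{p}, Set.ordConnected_singleton⟩

/-- The empty order-convex set. -/
def emp : Co P := ⟨∅, Set.ordConnected_empty⟩

end Co

/-- `lengthLE P n` states that the poset `P` has length at most `n`, that is,
every finite chain of `P` has at most `n + 1` elements. -/
def lengthLE (P : Type*) [PartialOrder P] (n : ℕ) : Prop :=
  ∀ C : Finset P, IsChain (· ≤ ·) (C : Set P) → C.card ≤ n + 1

section Identities

/-- The Stirlitz identity (S). -/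
def IdS (L : Type*) [Lattice L] : Prop :=
  ∀ a b b₀ b₁ c : L,
    a ⊓ ((b ⊓ (b₀ ⊔ b₁)) ⊔ c) =
      (a ⊓ (b ⊓ (b₀ ⊔ b₁)))
      ⊔ (a ⊓ (b₀ ⊔ c) ⊓ ((b ⊓ (b₀ ⊔ b₁) ⊓ (a ⊔ b₀)) ⊔ c))
      ⊔ (a ⊓ (b₁ ⊔ c) ⊓ ((b ⊓ (b₀ ⊔ b₁) ⊓ (a ⊔ b₁)) ⊔ c))

/-- The Udav identity (U). -/
def IdU (L : Type*) [Lattice L] : Prop :=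
  ∀ x x₀ x₁ x₂ : L,
    x ⊓ (x₀ ⊔ x₁) ⊓ (x₁ ⊔ x₂) ⊓ (x₀ ⊔ x₂) =
      (x ⊓ x₀ ⊓ (x₁ ⊔ x₂)) ⊔ (x ⊓ x₁ ⊓ (x₀ ⊔ x₂)) ⊔ (x ⊓ x₂ ⊓ (x₀ ⊔ x₁))

/-- The Bond identity (B). -/
def IdB (L : Type*) [Lattice L] : Prop :=
  ∀ x a₀ a₁ b₀ b₁ : L,
    x ⊓ (a₀ ⊔ a₁) ⊓ (b₀ ⊔ b₁) =
      (x ⊓ a₀ ⊓ (b₀ ⊔ b₁)) ⊔ (x ⊓ a₁ ⊓ (b₀ ⊔ b₁))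
      ⊔ (x ⊓ b₀ ⊓ (a₀ ⊔ a₁)) ⊔ (x ⊓ b₁ ⊓ (a₀ ⊔ a₁))
      ⊔ (x ⊓ (a₀ ⊔ a₁) ⊓ (b₀ ⊔ b₁) ⊓ (a₀ ⊔ b₀) ⊓ (a₁ ⊔ b₁))
      ⊔ (x ⊓ (a₀ ⊔ a₁) ⊓ (b₀ ⊔ b₁) ⊓ (a₀ ⊔ b₁) ⊓ (a₁ ⊔ b₀))

/-- The identity (L₂). -/
def IdL2 (L : Type*) [Lattice L] : Prop :=
  ∀ a b b' c c' : L,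
    a ⊓ ((b ⊓ (c ⊔ c')) ⊔ b') =
      (a ⊓ b ⊓ (c ⊔ c')) ⊔ (a ⊓ ((b ⊓ c) ⊔ b')) ⊔ (a ⊓ ((b ⊓ c') ⊔ b'))

variable {L : Type*} [Lattice L]

/-- The lattice polynomial `U_{i,n}` (in the variables `x₀, …, xₙ, x'₁, …, x'ₙ`). -/
def Upoly (x x' : ℕ → L) (n : ℕ) (i : ℕ) : L :=
  if h : n ≤ i then x n
  else x i ⊓ (Upoly x x' n (i + 1) ⊔ x' (i + 1))
  termination_by n - i
  decreasing_by omega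

/-- The lattice polynomial `V_{i,j,n}`. -/
def Vpoly (x x' : ℕ → L) (n i : ℕ) (j : ℕ) : L :=
  if h : i ≤ j then (x i ⊓ Upoly x x' n (i + 1)) ⊔ (x i ⊓ x' (i + 1))
  else x j ⊓ (Vpoly x x' n i (j + 1) ⊔ x' (j + 1))
  termination_by i - j
  decreasing_by omega

/-- The lattice polynomial `W_{i,j,n}`. -/
def Wpoly (x x' : ℕ → L) (n i : ℕ) (j : ℕ) : L :=
  if h : i ≤ j then
    x i ⊓ (x' (i + 1) ⊔ x' (i + 2)) ⊓ ((Upoly x x' n (i + 1) ⊓ (x i ⊔ x' (i + 2))) ⊔ x' (i + 1))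
  else x j ⊓ (Wpoly x x' n i (j + 1) ⊔ x' (j + 1))
  termination_by i - j
  decreasing_by omega

/-- `bigJoin f k = f 0 ⊔ f 1 ⊔ ⋯ ⊔ f k`. -/
def bigJoin (f : ℕ → L) : ℕ → L
  | 0 => f 0
  | k + 1 => bigJoin f k ⊔ f (k + 1)

end Identities

/-- The identity (Hₙ) : `Uₙ = ⋁_{0 ≤ i ≤ n-1} V_{i,n} ∨ ⋁_{0 ≤ i ≤ n-2} W_{i,n}`
(intended for `n ≥ 1`). -/
def IdH (n : ℕ) (L : Type*) [Lattice L] : Prop :=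
  ∀ x x' : ℕ → L,
    Upoly x x' n 0 =
      bigJoin (fun i =>
        if i + 2 ≤ n then Vpoly x x' n i 0 ⊔ Wpoly x x' n i 0 else Vpoly x x' n i 0) (n - 1)

/-- The identity (H_{m,n}) (intended for `m, n ≥ 1`); the common base point is
`x 0 = y 0 = t`. -/
def IdHmn (m n : ℕ) (L : Type*) [Lattice L] : Prop :=
  ∀ x x' y y' : ℕ → L, x 0 = y 0 →
    Upoly x x' m 0 ⊓ Upoly y y' n 0 =
      bigJoin (fun i =>
          if i + 2 ≤ m then
            (Vpoly x x' m i 0 ⊓ Upoly y y' n 0) ⊔ (Wpoly x x' m i 0 ⊓ Upoly y y' n 0)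
          else Vpoly x x' m i 0 ⊓ Upoly y y' n 0) (m - 1)
      ⊔ bigJoin (fun j =>
          if j + 2 ≤ n then
            (Upoly x x' m 0 ⊓ Vpoly y y' n j 0) ⊔ (Upoly x x' m 0 ⊓ Wpoly y y' n j 0)
          else Upoly x x' m 0 ⊓ Vpoly y y' n j 0) (n - 1)
      ⊔ (Upoly x x' m 0 ⊓ Upoly y y' n 0 ⊓ (x 1 ⊔ y' 1) ⊓ (x' 1 ⊔ y 1))

/-- `p` is join-irreducible: `p = x ⊔ y` implies `p = x` or `p = y`. -/
def JIrr {L : Type*} [Lattice L] (p : L) : Prop :=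
  ∀ x y : L, p = x ⊔ y → p = x ∨ p = y

/-- The join-dependency relation `p D q`. -/
def DRel {L : Type*} [Lattice L] (p q : L) : Prop :=
  p ≠ q ∧ ∃ x : L, p ≤ q ⊔ x ∧ ∀ y < q, ¬ p ≤ y ⊔ x

/-- A subset `S` of a lattice `L` is a join-seed. -/
def JoinSeed (L : Type*) [Lattice L] (S : Set L) : Prop :=
  (∀ p ∈ S, JIrr p) ∧
  (∀ a : L, ∃ T ⊆ S, IsLUB T a) ∧
  (∀ p ∈ S, ∀ a b : L, p ≤ a ⊔ b → ¬ p ≤ a → ¬ p ≤ b →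
    ∃ x ∈ S, ∃ y ∈ S, x ≤ a ∧ y ≤ b ∧ p ≤ x ⊔ y ∧
      (∀ x' < x, ¬ p ≤ x' ⊔ y) ∧ (∀ y' < y, ¬ p ≤ x ⊔ y'))

/-- The poset `P_{I,J} = I ∪ {p} ∪ J`, where every element of `I` is below `p`,
`p` is below every element of `J`, every element of `I` is below every element
of `J`, and there are no other strict comparabilities. -/
def PIJ (I J : Type*) : Type _ := I ⊕ (Unit ⊕ J)

namespace PIJ

variable {I J : Type*}

/-- The rank (height) of an element of `P_{I,J}`. -/
def rank (a : PIJ I J) : ℕ :=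
  Sum.elim (fun _ => 0) (Sum.elim (fun _ => 1) fun _ => 2) a

instance : PartialOrder (PIJ I J) where
  le a b := a = b ∨ rank a < rank b
  le_refl a := Or.inl rfl
  le_trans a b c hab hbc := by
    rcases hab with rfl | h
    · exact hbc
    · rcases hbc with rfl | h'
      · exact Or.inr h
      · exact Or.inr (h.trans h')
  le_antisymm a b hab hba := by
    rcases hab with rfl | h
    · rfl
    · rcases hba with rfl | h'
      · rfl
      · omega

end PIJ

/-- A poset is tree-like if it has no infinite bounded chain and between any two
points there is at most one repetition-free finite path with respect to the
covering relation. -/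
def TreeLike (P : Type*) [PartialOrder P] : Prop :=
  (∀ C : Set P, IsChain (· ≤ ·) C → BddAbove C → BddBelow C → C.Finite) ∧
  (∀ a b : P, ∀ l₁ l₂ : List P,
    l₁.Nodup → l₁.head? = some a → l₁.getLast? = some b →
      l₁.Chain' (fun u v => u ⋖ v ∨ v ⋖ u) →
    l₂.Nodup → l₂.head? = some a → l₂.getLast? = some b →
      l₂.Chain' (fun u v => u ⋖ v ∨ v ⋖ u) →
    l₁ = l₂)

/-- A subset `U` of a poset `P` is `D`-closed. -/
def DClosed {P : Type*} [PartialOrder P] (U : Set P) : Prop :=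
  ∀ x p y : P, x < p → p < y → (x ∈ U ∨ y ∈ U) → p ∈ U

/-- A complete congruence of a complete lattice. -/
structure IsCompleteCongr {L : Type*} [CompleteLattice L] (θ : L → L → Prop) : Prop where
  refl : ∀ x, θ x x
  symm : ∀ {x y}, θ x y → θ y x
  trans : ∀ {x y z}, θ x y → θ y z → θ x z
  sup : ∀ {a b c d}, θ a b → θ c d → θ (a ⊔ c) (b ⊔ d)
  inf : ∀ {a b c d}, θ a b → θ c d → θ (a ⊓ c) (b ⊓ d)
  cSup : ∀ (x : L) (Y : Set L), Y.Nonempty → (∀ y ∈ Y, θ x y) → θ x (sSup Y)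
  cInf : ∀ (x : L) (Y : Set L), Y.Nonempty → (∀ y ∈ Y, θ x y) → θ x (sInf Y)

/-- The map `h_U : Co(P) → Co(P ∖ U)`, `X ↦ X ∖ U`. -/
def coRestrict {P : Type*} [PartialOrder P] (U : Set P) (X : Co P) :
    Co {p : P // p ∉ U} :=
  ⟨Subtype.val ⁻¹' X.1, by
    constructor
    rintro a ha b hb z hz
    exact X.2.out ha hb ⟨hz.1, hz.2⟩⟩

/-- The lattice `D(P)` of all `D`-closed subsets of a poset `P`. -/
def DSub (P : Type*) [PartialOrder P] : Type _ := {U : Set P // DClosed U}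

namespace DSub

variable {P : Type*} [PartialOrder P]

instance : PartialOrder (DSub P) := Subtype.partialOrder _

instance : InfSet (DSub P) :=
  ⟨fun S => ⟨⋂ U ∈ S, U.1, by
    intro x p y h1 h2 h3
    simp only [Set.mem_iInter] at h3 ⊢
    intro U hU
    exact U.2 x p y h1 h2 (h3.imp (fun h => h U hU) fun h => h U hU)⟩⟩

noncomputable instance : CompleteLattice (DSub P) :=
  completeLatticeOfInf (DSub P) (by
    intro S
    constructor
    · intro t ht
      exact Set.biInter_subset_of_mem (t := fun U => U.1) ht
    · intro b hb
      exact Set.subset_iInter₂ fun t ht => hb ht)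

end DSub

/-! Let `f : Co(𝐦) → Co(P)` be a lattice embedding, `A k = f {k}` and `B = f ∅`. The sets `A k`
are convex, any two of them meet in `B`, and, since `{k} ≤ {i} ⊔ {j}` for `i ≤ k ≤ j`, every
point of `A k` lies between two points of `A i ∪ A j`. A point `p ∈ A (m-2) \ B` is therefore
comparable with some `y ∈ A (m-1) \ B`, say `p < y` (otherwise pass to the dual order). Below
`y`, every point of `A (k+1) \ B` lies strictly above a point of `A k \ B`: the alternative would
place it in the convex set `A (m-1)`. Descending from `p` gives a chain of `m` elements, so
`m ≤ n + 1` (trivially so for `m ≤ 2`). The chain `𝐦` itself has length `m - 1`, and `Co(𝐧+𝟐)`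
separates `SUB_n` from `SUB_{n+1}`. -/

namespace Co

variable {P : Type*} [PartialOrder P]

lemma coe_inf (X Y : Co P) : (X ⊓ Y).1 = X.1 ∩ Y.1 := by
  refine subset_antisymm
    (subset_inter (inf_le_left (a := X) (b := Y)) (inf_le_right (a := X) (b := Y))) ?_
  exact (le_inf inter_subset_left inter_subset_right : mk' _ (X.2.inter Y.2) ≤ X ⊓ Y)

lemma exists_le_le_of_mem_sup {X Y : Co P} {p : P} (hp : p ∈ (X ⊔ Y).1) :
    ∃ a ∈ X.1 ∪ Y.1, ∃ b ∈ X.1 ∪ Y.1, a ≤ p ∧ p ≤ b := by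
  let H : Co P := mk' (upperClosure (X.1 ∪ Y.1) ∩ lowerClosure (X.1 ∪ Y.1))
    ((upperClosure _).upper.ordConnected.inter (lowerClosure _).lower.ordConnected)
  have hXY : X ⊔ Y ≤ H := sup_le
    (fun x hx => ⟨subset_upperClosure (Or.inl hx), subset_lowerClosure (Or.inl hx)⟩)
    (fun x hx => ⟨subset_upperClosure (Or.inr hx), subset_lowerClosure (Or.inr hx)⟩)
  obtain ⟨⟨a, ha, hap⟩, ⟨b, hb, hpb⟩⟩ := hXY hp
  exact ⟨a, ha, b, hb, hap, hpb⟩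

lemma sngl_inf_sngl {i j : P} (hij : i ≠ j) : sngl i ⊓ sngl j = emp :=
  Subtype.ext <| (coe_inf _ _).trans (singleton_inter_eq_empty.mpr hij)

lemma sngl_le_sngl_sup_sngl {i j k : P} (hik : i ≤ k) (hkj : k ≤ j) :
    sngl k ≤ sngl i ⊔ sngl j := by
  rintro _ rfl
  exact (sngl i ⊔ sngl j).2.out (le_sup_left (b := sngl j) rfl)
    (le_sup_right (a := sngl i) rfl) ⟨hik, hkj⟩

lemma sngl_ne_emp (i : P) : sngl i ≠ emp :=
  fun h => singleton_ne_empty i (congrArg Subtype.val h)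

end Co

section LengthLE

variable {P : Type*} [PartialOrder P] {n : ℕ}

lemma lengthLE_of_card_le [Fintype P] (h : Fintype.card P ≤ n + 1) : lengthLE P n :=
  fun C _ => C.card_le_univ.trans h

lemma lengthLE.dual (h : lengthLE P n) : lengthLE Pᵒᵈ n :=
  fun C hC => h C hC.symm

lemma lengthLE.length_le (h : lengthLE P n) (s : LTSeries P) : s.length ≤ n := by
  have hchain := h (Finset.univ.map ⟨s, s.strictMono.injective⟩) (by
    rw [Finset.coe_map, Finset.coe_univ, image_univ]
    exact s.monotone.isChain_range)
  rwa [Finset.card_map, Finset.card_univ, Fintype.card_fin, add_le_add_iff_right] at hchain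

end LengthLE

section Descent

variable {P : Type*} [PartialOrder P]

lemma exists_mem_diff_lt_or_lt {X Y B : Set P} (hX : X.OrdConnected) (hY : Y.OrdConnected)
    (hBX : B ⊆ X) {p a b : P} (hpX : p ∉ X) (hpY : p ∉ Y) (ha : a ∈ X ∪ Y) (hb : b ∈ X ∪ Y)
    (hap : a ≤ p) (hpb : p ≤ b) : ∃ y ∈ Y \ B, p < y ∨ y < p := by
  rcases ha with ha | ha <;> rcases hb with hb | hb
  · exact absurd (hX.out ha hb ⟨hap, hpb⟩) hpX
  · refine ⟨b, ⟨hb, fun h => hpX (hX.out ha (hBX h) ⟨hap, hpb⟩)⟩, Or.inl (hpb.lt_of_ne ?_)⟩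
    rintro rfl
    exact hpY hb
  · refine ⟨a, ⟨ha, fun h => hpX (hX.out (hBX h) hb ⟨hap, hpb⟩)⟩, Or.inr (hap.lt_of_ne' ?_)⟩
    rintro rfl
    exact hpY ha
  · exact absurd (hY.out ha hb ⟨hap, hpb⟩) hpY

theorem exists_ltSeries_last_eq_of_lt {A : ℕ → Set P} {B : Set P} {N : ℕ} {y : P}
    (hN : (A N).OrdConnected) (hBN : B ⊆ A N) (hy : y ∈ A N)
    (hdisj : ∀ i ≤ N, ∀ j ≤ N, i ≠ j → A i ∩ A j ⊆ B)
    (hle : ∀ k, k + 1 < N → ∀ p ∈ A (k + 1), ∃ a ∈ A k ∪ A N, a ≤ p) :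
    ∀ k < N, ∀ p ∈ A k \ B, p < y → ∃ s : LTSeries P, s.length = k ∧ s.last = p := by
  intro k
  induction k with
  | zero => exact fun _ p _ _ => ⟨RelSeries.singleton _ p, rfl, rfl⟩
  | succ k ih =>
    intro hk p hp hpy
    obtain ⟨a, ha, hap⟩ := hle k hk p hp.1
    have hpN : p ∉ A N := fun h => hp.2 (hdisj _ hk.le N le_rfl hk.ne ⟨hp.1, h⟩)
    have haN : a ∉ A N := fun h => hpN (hN.out h hy ⟨hap, hpy.le⟩)
    have hak : a ∈ A k := ha.resolve_right haN
    have hap' : a < p := hap.lt_of_ne <| by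
      rintro rfl
      exact hp.2 (hdisj _ hk.le k (by omega) (by omega) ⟨hp.1, hak⟩)
    obtain ⟨s, hs, hlast⟩ := ih (by omega) a ⟨hak, fun h => haN (hBN h)⟩ (hap'.trans hpy)
    exact ⟨s.snoc p (hlast ▸ hap'), by simp [hs], by simp⟩

end Descent

namespace Co

variable {α P : Type*} [PartialOrder α] [PartialOrder P] (f : LatticeHom (Co α) (Co P))

lemma map_emp_subset (X : Co α) : (f emp).1 ⊆ (f X).1 :=
  OrderHomClass.mono f (empty_subset X.1)

lemma inter_map_sngl {i j : α} (hij : i ≠ j) :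
    (f (sngl i)).1 ∩ (f (sngl j)).1 = (f emp).1 := by
  rw [← coe_inf, ← map_inf, sngl_inf_sngl hij]

lemma exists_le_le_of_mem_map_sngl {i j k : α} (hik : i ≤ k) (hkj : k ≤ j) {p : P}
    (hp : p ∈ (f (sngl k)).1) :
    ∃ a ∈ (f (sngl i)).1 ∪ (f (sngl j)).1, ∃ b ∈ (f (sngl i)).1 ∪ (f (sngl j)).1,
      a ≤ p ∧ p ≤ b := by
  apply exists_le_le_of_mem_sup
  rw [← map_sup]
  exact OrderHomClass.mono f (sngl_le_sngl_sup_sngl hik hkj) hp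

lemma exists_mem_map_sngl_not_mem (hf : Function.Injective f) (i : α) :
    ∃ p ∈ (f (sngl i)).1, p ∉ (f emp).1 :=
  not_subset.mp fun h => sngl_ne_emp i (hf (Subtype.ext (h.antisymm (map_emp_subset f _))))

open Fin.NatCast in
theorem exists_ltSeries_of_injective {N : ℕ} (hN : 2 ≤ N)
    (f : LatticeHom (Co (Fin (N + 1))) (Co P)) (hf : Function.Injective f) :
    (∃ s : LTSeries P, s.length = N) ∨ ∃ s : LTSeries Pᵒᵈ, s.length = N := by
  set A : ℕ → Set P := fun k => (f (sngl (k : Fin (N + 1)))).1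
  set B : Set P := (f emp).1
  have hdisj : ∀ i ≤ N, ∀ j ≤ N, i ≠ j → A i ∩ A j ⊆ B := fun i hi j hj hij =>
    (inter_map_sngl f fun h => hij <| le_antisymm ((Fin.natCast_le_natCast hi hj).1 h.le)
      ((Fin.natCast_le_natCast hj hi).1 h.ge)).subset
  have hbetween : ∀ i k j, i ≤ k → k ≤ j → j ≤ N → ∀ p ∈ A k,
      ∃ a ∈ A i ∪ A j, ∃ b ∈ A i ∪ A j, a ≤ p ∧ p ≤ b := fun i k j hik hkj hj _ hp =>
    exists_le_le_of_mem_map_sngl f ((Fin.natCast_le_natCast (by omega) (by omega)).2 hik)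
      ((Fin.natCast_le_natCast (by omega) hj).2 hkj) hp
  obtain ⟨p, hpA, hpB⟩ := exists_mem_map_sngl_not_mem f hf ((N - 1 : ℕ) : Fin (N + 1))
  have hp : p ∈ A (N - 1) \ B := ⟨hpA, hpB⟩
  obtain ⟨a, ha, b, hb, hap, hpb⟩ :=
    hbetween 0 (N - 1) N (Nat.zero_le _) (Nat.sub_le _ _) le_rfl p hpA
  obtain ⟨y, hy, hpy | hyp⟩ := exists_mem_diff_lt_or_lt (f _).2 (f _).2 (map_emp_subset f _)
    (fun h => hpB (hdisj _ (by omega) 0 (by omega) (by omega) ⟨hpA, h⟩))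
    (fun h => hpB (hdisj _ (by omega) N le_rfl (by omega) ⟨hpA, h⟩)) ha hb hap hpb
  · obtain ⟨s, hs, hlast⟩ := exists_ltSeries_last_eq_of_lt (f _).2 (map_emp_subset f _) hy.1 hdisj
      (fun k hk q hq =>
        let ⟨c, hc, _, _, hcq, _⟩ := hbetween k (k + 1) N k.le_succ hk.le le_rfl q hq
        ⟨c, hc, hcq⟩) (N - 1) (by omega) p hp hpy
    have hlen : s.length + 1 = N := by omega
    exact Or.inl ⟨s.snoc y (hlast ▸ hpy), hlen⟩
  · obtain ⟨s, hs, hlast⟩ := exists_ltSeries_last_eq_of_lt (P := Pᵒᵈ) (A := A) (f _).2.dual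
      (map_emp_subset f _) hy.1 hdisj
      (fun k hk q hq =>
        let ⟨_, _, c, hc, _, hqc⟩ := hbetween k (k + 1) N k.le_succ hk.le le_rfl q hq
        ⟨c, hc, hqc⟩) (N - 1) (by omega) p hp hyp
    have hlen : s.length + 1 = N := by omega
    exact Or.inr ⟨s.snoc y (hlast ▸ hyp), hlen⟩

end Co

theorem lengthLE.le_add_one_of_injective {P : Type*} [PartialOrder P] {m n : ℕ} (hn : 0 < n)
    (hP : lengthLE P n) (f : LatticeHom (Co (Fin m)) (Co P)) (hf : Function.Injective f) :
    m ≤ n + 1 := by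
  by_contra! h
  obtain ⟨N, rfl⟩ : ∃ N, m = N + 1 := ⟨m - 1, by omega⟩
  rcases Co.exists_ltSeries_of_injective (by omega) f hf with ⟨s, hs⟩ | ⟨s, hs⟩
  · have := hP.length_le s
    omega
  · have := hP.dual.length_le s
    omega

theorem stmt8_general (m n : ℕ) (hn : 0 < n) :
    ((∃ (P : Type) (_ : PartialOrder P), lengthLE P n ∧
        ∃ f : LatticeHom (Co (Fin m)) (Co P), Function.Injective f) ↔ m ≤ n + 1) ∧
    (∃ (L : Type) (_ : Lattice L),
      (∃ (P : Type) (_ : PartialOrder P), lengthLE P (n + 1) ∧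
        ∃ f : LatticeHom L (Co P), Function.Injective f) ∧
      ¬ (∃ (P : Type) (_ : PartialOrder P), lengthLE P n ∧
        ∃ f : LatticeHom L (Co P), Function.Injective f)) := by
  refine ⟨⟨fun ⟨_, _, hP, f, hf⟩ => hP.le_add_one_of_injective hn f hf, fun hmn =>
    ⟨Fin m, inferInstance, lengthLE_of_card_le (by simpa using hmn), LatticeHom.id _,
      Function.injective_id⟩⟩, ?_⟩
  refine ⟨Co (Fin (n + 2)), inferInstance, ⟨Fin (n + 2), inferInstance,
    lengthLE_of_card_le (by simp), LatticeHom.id _, Function.injective_id⟩, ?_⟩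
  rintro ⟨_, _, hP, f, hf⟩
  have := hP.le_add_one_of_injective hn f hf
  omega

theorem stmt8 (m n : ℕ) (hm : 0 < m) (hn : 0 < n) :
    ((∃ (P : Type) (_ : PartialOrder P), lengthLE P n ∧
        ∃ f : LatticeHom (Co (Fin m)) (Co P), Function.Injective f) ↔ m ≤ n + 1) ∧
    (∃ (L : Type) (_ : Lattice L),
      (∃ (P : Type) (_ : PartialOrder P), lengthLE P (n + 1) ∧
        ∃ f : LatticeHom L (Co P), Function.Injective f) ∧
      ¬ (∃ (P : Type) (_ : PartialOrder P), lengthLE P n ∧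
        ∃ f : LatticeHom L (Co P), Function.Injective f)) :=
  stmt8_general m n hn
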